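/- arXiv:1010.3204 — 5 statements merged into one kernel-verified Lean document; each statement's English description precedes it below -/
import Mathlib

section
/- Let A be an n×n complex matrix, let ‖·‖ denote the operator norm induced by the Euclidean norm, let α ≥ 1 be real, let j be a natural number, and let t ≥ 0. Then ‖Σ_{ℓ=0}^∞ Aˡ t^{αℓ+j}/Γ(αℓ + j + 1)‖ ≤ tʲ · exp(‖A‖ · tᵅ). -/
/-!
Since `α ≥ 1`, the argument `αℓ + j + 1` of the Gamma function is at least `ℓ + 1` (and at
least `2` once `ℓ ≥ 1`), where `Γ` is increasing, so `Γ(αℓ + j + 1) ≥ ℓ!`. Together with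
`t^(αℓ+j) = tʲ (tᵅ)ˡ` and `‖Aˡ‖ ≤ ‖A‖ˡ`, the series is dominated termwise by
`tʲ Σ (‖A‖ tᵅ)ˡ / ℓ! = tʲ exp(‖A‖ tᵅ)`.
-/

open scoped Nat Matrix.Norms.L2Operator

lemma Real.factorial_le_Gamma_add_one {m : ℕ} {x : ℝ} (hm : 1 ≤ m) (hx : m ≤ x) :
    (m ! : ℝ) ≤ Real.Gamma (x + 1) := by
  have h2 : (2 : ℝ) ≤ m + 1 := by exact_mod_cast Nat.succ_le_succ hm
  rw [← Real.Gamma_nat_eq_factorial]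
  exact Real.Gamma_strictMonoOn_Ici.monotoneOn h2 (h2.trans (by linarith)) (by linarith)

lemma Real.factorial_le_Gamma_mul_add {α : ℝ} (hα : 1 ≤ α) (ℓ j : ℕ) :
    (ℓ ! : ℝ) ≤ Real.Gamma (α * ℓ + j + 1) := by
  rcases Nat.eq_zero_or_pos ℓ with rfl | hℓ
  · simpa [Real.Gamma_nat_eq_factorial] using Nat.succ_le_of_lt j.factorial_pos
  · refine Real.factorial_le_Gamma_add_one hℓ ?_
    have hℓα : (ℓ : ℝ) ≤ α * ℓ := le_mul_of_one_le_left (Nat.cast_nonneg ℓ) hα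
    linarith [(Nat.cast_nonneg j : (0 : ℝ) ≤ j)]

lemma Real.rpow_mul_add_div_Gamma_le {α : ℝ} (hα : 1 ≤ α) (ℓ j : ℕ) {t : ℝ} (ht : 0 ≤ t) :
    t ^ (α * ℓ + j) / Real.Gamma (α * ℓ + j + 1) ≤ t ^ (j : ℝ) * ((t ^ α) ^ ℓ / ℓ !) := by
  have hsplit : t ^ (α * ℓ + j) = t ^ (j : ℝ) * (t ^ α) ^ ℓ := by
    rw [Real.rpow_add_of_nonneg ht (by positivity) (Nat.cast_nonneg j), Real.rpow_mul ht,
      Real.rpow_natCast, mul_comm]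
  rw [hsplit, ← mul_div_assoc]
  exact div_le_div_of_nonneg_left (by positivity) (by positivity)
    (Real.factorial_le_Gamma_mul_add hα ℓ j)

lemma Matrix.l2_opNorm_pow_le {𝕜 n : Type*} [RCLike 𝕜] [Fintype n] [DecidableEq n]
    (A : Matrix n n 𝕜) (ℓ : ℕ) : ‖A ^ ℓ‖ ≤ ‖A‖ ^ ℓ := by
  rcases Nat.eq_zero_or_pos ℓ with rfl | hℓ
  · rw [pow_zero, pow_zero, Matrix.cstar_norm_def, map_one, ContinuousLinearMap.one_def]
    exact ContinuousLinearMap.norm_id_le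
  · exact norm_pow_le' A hℓ

/-- Bound (2.17) of Lemma 2.2(ii): for `α ≥ 1`, `j : ℕ` and `t ≥ 0`, the fundamental
matrix `Φ_{αj}(t) = Σ_ℓ Aˡ t^{αℓ+j}/Γ(αℓ+j+1)` satisfies
`‖Φ_{αj}(t)‖ ≤ tʲ · exp(‖A‖ tᵅ)`, with the operator norm induced by the Euclidean norm. -/
theorem phi_alpha_j_norm_le {n : ℕ} (A : Matrix (Fin n) (Fin n) ℂ)
    (α : ℝ) (hα : 1 ≤ α) (j : ℕ) (t : ℝ) (ht : 0 ≤ t) :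
    ‖∑' ℓ : ℕ, ((t ^ (α * ℓ + j) / Real.Gamma (α * ℓ + j + 1) : ℝ) : ℂ) • A ^ ℓ‖ ≤
      t ^ (j : ℝ) * Real.exp (‖A‖ * t ^ α) := by
  have hexp : HasSum (fun ℓ : ℕ => t ^ (j : ℝ) * ((‖A‖ * t ^ α) ^ ℓ / ℓ !))
      (t ^ (j : ℝ) * Real.exp (‖A‖ * t ^ α)) := by
    rw [Real.exp_eq_exp_ℝ]
    exact (NormedSpace.expSeries_div_hasSum_exp (‖A‖ * t ^ α)).mul_left _
  refine tsum_of_norm_bounded hexp fun ℓ => ?_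
  have hGamma : 0 < Real.Gamma (α * ℓ + j + 1) :=
    (Nat.cast_pos.mpr ℓ.factorial_pos).trans_le (Real.factorial_le_Gamma_mul_add hα ℓ j)
  have hcoef : 0 ≤ t ^ (α * ℓ + j) / Real.Gamma (α * ℓ + j + 1) :=
    div_nonneg (Real.rpow_nonneg ht _) hGamma.le
  calc ‖((t ^ (α * ℓ + j) / Real.Gamma (α * ℓ + j + 1) : ℝ) : ℂ) • A ^ ℓ‖
      = t ^ (α * ℓ + j) / Real.Gamma (α * ℓ + j + 1) * ‖A ^ ℓ‖ := by
        rw [norm_smul, Complex.norm_real, Real.norm_of_nonneg hcoef]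
    _ ≤ t ^ (j : ℝ) * ((t ^ α) ^ ℓ / ℓ !) * ‖A‖ ^ ℓ :=
        mul_le_mul (Real.rpow_mul_add_div_Gamma_le hα ℓ j ht) (Matrix.l2_opNorm_pow_le A ℓ)
          (norm_nonneg _) (by positivity)
    _ = t ^ (j : ℝ) * ((‖A‖ * t ^ α) ^ ℓ / ℓ !) := by
        rw [mul_pow]
        ring
end

section
/- Let α ≥ 1 be a real number. There exists a constant K ≥ 1, depending only on α, such that for every n×n complex matrix A and every t > 0, ‖Σ_{ℓ=0}^∞ Aˡ t^{(ℓ+1)α−1}/Γ((ℓ+1)α)‖ ≤ K · t^{α−1} · exp(‖A‖ · tᵅ), where ‖·‖ is the operator norm induced by the Euclidean norm. -/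
open scoped Matrix.Norms.L2Operator Nat
open Real

/-!
Since `α ≥ 1`, monotonicity of `Γ` on `[2, ∞)` gives `ℓ! = Γ(ℓ + 1) ≤ Γ((ℓ + 1)α)` for `ℓ ≥ 1`,
so `ℓ! ≤ K Γ((ℓ + 1)α)` for all `ℓ` with `K = max 1 Γ(α)⁻¹`. Hence the `ℓ`-th term of `Φ_α(t)`
has norm at most `K t^{α-1} (‖A‖ tᵅ)^ℓ / ℓ!`, and summing this majorant gives the exponential.
-/

theorem CStarRing.norm_pow_le {E : Type*} [NormedRing E] [StarRing E] [CStarRing E]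
    (a : E) (n : ℕ) : ‖a ^ n‖ ≤ ‖a‖ ^ n := by
  cases subsingleton_or_nontrivial E
  · rw [Subsingleton.elim (a ^ n) 0, norm_zero]
    positivity
  · exact _root_.norm_pow_le a n

theorem norm_tsum_le_mul_exp_of_norm_le {E : Type*} [SeminormedAddCommGroup E] {f : ℕ → E}
    {C r : ℝ} (hf : ∀ n, ‖f n‖ ≤ C * r ^ n / n !) : ‖∑' n, f n‖ ≤ C * exp r := by
  refine tsum_of_norm_bounded ?_ hf
  simpa only [mul_div_assoc, ← exp_eq_exp_ℝ] using
    (NormedSpace.expSeries_div_hasSum_exp r).mul_left C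

namespace Real

theorem factorial_le_Gamma_succ_mul {α : ℝ} (hα : 1 ≤ α) {ℓ : ℕ} (hℓ : 1 ≤ ℓ) :
    (ℓ ! : ℝ) ≤ Gamma ((ℓ + 1) * α) := by
  have hℓ' : (1 : ℝ) ≤ ℓ := by exact_mod_cast hℓ
  have hle : (ℓ : ℝ) + 1 ≤ (ℓ + 1) * α := by nlinarith
  rw [← Gamma_nat_eq_factorial]
  exact Gamma_strictMonoOn_Ici.monotoneOn (by simp only [Set.mem_Ici]; linarith)
    (by simp only [Set.mem_Ici]; linarith) hle

theorem exists_factorial_le_mul_Gamma_succ_mul {α : ℝ} (hα : 1 ≤ α) :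
    ∃ K : ℝ, 1 ≤ K ∧ ∀ ℓ : ℕ, (ℓ ! : ℝ) ≤ K * Gamma ((ℓ + 1) * α) := by
  have hΓα : 0 < Gamma α := Gamma_pos_of_pos (by linarith)
  refine ⟨max 1 (Gamma α)⁻¹, le_max_left _ _, fun ℓ => ?_⟩
  rcases Nat.eq_zero_or_pos ℓ with rfl | hℓ
  · have : (Gamma α)⁻¹ * Gamma α ≤ max 1 (Gamma α)⁻¹ * Gamma α :=
      mul_le_mul_of_nonneg_right (le_max_right _ _) hΓα.le
    simpa [inv_mul_cancel₀ hΓα.ne'] using this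
  · calc (ℓ ! : ℝ) ≤ Gamma ((ℓ + 1) * α) := factorial_le_Gamma_succ_mul hα hℓ
      _ ≤ max 1 (Gamma α)⁻¹ * Gamma ((ℓ + 1) * α) :=
        le_mul_of_one_le_left (Gamma_pos_of_pos (by positivity)).le (le_max_left _ _)

theorem rpow_div_Gamma_succ_mul_le {α K t : ℝ} (hα : 0 < α)
    (hK : ∀ ℓ : ℕ, (ℓ ! : ℝ) ≤ K * Gamma ((ℓ + 1) * α)) (ht : 0 < t) (ℓ : ℕ) :
    t ^ ((ℓ + 1) * α - 1) / Gamma ((ℓ + 1) * α) ≤ K * t ^ (α - 1) * (t ^ α) ^ ℓ / ℓ ! := by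
  have hsplit : t ^ ((ℓ + 1) * α - 1) = t ^ (α - 1) * (t ^ α) ^ ℓ := by
    rw [← rpow_natCast, ← rpow_mul ht.le, ← rpow_add ht]
    ring_nf
  rw [div_le_div_iff₀ (Gamma_pos_of_pos (by positivity)) (by positivity), hsplit]
  calc t ^ (α - 1) * (t ^ α) ^ ℓ * ℓ !
      ≤ t ^ (α - 1) * (t ^ α) ^ ℓ * (K * Gamma ((ℓ + 1) * α)) :=
        mul_le_mul_of_nonneg_left (hK ℓ) (by positivity)
    _ = K * t ^ (α - 1) * (t ^ α) ^ ℓ * Gamma ((ℓ + 1) * α) := by ring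

end Real

/-- Bound (2.18) of Lemma 2.2(ii): for `α ≥ 1` there is a constant `K ≥ 1`, depending
only on `α`, with `‖Φ_α(t)‖ = ‖Σ_ℓ Aˡ t^{(ℓ+1)α−1}/Γ((ℓ+1)α)‖ ≤ K t^{α−1} exp(‖A‖ tᵅ)`
for every square complex matrix `A` and every `t > 0`, with the operator norm induced
by the Euclidean norm. -/
theorem phi_alpha_norm_le (α : ℝ) (hα : 1 ≤ α) :
    ∃ K : ℝ, 1 ≤ K ∧ ∀ (n : ℕ) (A : Matrix (Fin n) (Fin n) ℂ) (t : ℝ), 0 < t →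
      ‖∑' ℓ : ℕ, ((t ^ ((ℓ + 1) * α - 1) / Real.Gamma ((ℓ + 1) * α) : ℝ) : ℂ) • A ^ ℓ‖ ≤
        K * t ^ (α - 1) * Real.exp (‖A‖ * t ^ α) := by
  obtain ⟨K, hK1, hK⟩ := exists_factorial_le_mul_Gamma_succ_mul hα
  refine ⟨K, hK1, fun n A t ht => norm_tsum_le_mul_exp_of_norm_le fun ℓ => ?_⟩
  have hcoeff : 0 ≤ t ^ ((ℓ + 1) * α - 1) / Gamma ((ℓ + 1) * α) :=
    div_nonneg (rpow_nonneg ht.le _) (Gamma_pos_of_pos (by positivity)).le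
  rw [norm_smul, Complex.norm_real, norm_of_nonneg hcoeff]
  calc t ^ ((ℓ + 1) * α - 1) / Gamma ((ℓ + 1) * α) * ‖A ^ ℓ‖
      ≤ K * t ^ (α - 1) * (t ^ α) ^ ℓ / ℓ ! * ‖A‖ ^ ℓ :=
        mul_le_mul (rpow_div_Gamma_succ_mul_le (by linarith) hK ht ℓ)
          (CStarRing.norm_pow_le A ℓ) (norm_nonneg _) (by positivity)
    _ = K * t ^ (α - 1) * (‖A‖ * t ^ α) ^ ℓ / ℓ ! := by ring
end

section
/- For every real number α with 0 < α < 1 and every natural number j, the sequence ℓ ↦ ℓ! / (ℓ^{(1−α)ℓ} · Γ(αℓ + j + 1)) tends to 0 as ℓ → ∞. -/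
open Real Filter Topology
open scoped Nat

/-!
Stirling's bound `ℓ! ≤ e √ℓ (ℓ/e)^ℓ` controls the numerator. For the denominator, `Γ(x + 1)`
dominates `⌊x⌋!`, and since `t ↦ t log t - t` has derivative `log t`, passing from `⌊x⌋` to `x`
costs at most a factor `x`: `Γ(x + 1) ≥ (x/e)^x / x` for `x ≥ 1`. The quotient is then at most
`e α ℓ^{3/2} exp(-(1 - α + α log α) ℓ)`, and `1 - α + α log α > 0` because
`log (1/α) < 1/α - 1` for `α ≠ 1`.
-/

lemma factorial_le_exp_one_mul_sqrt_mul_div_exp_one_pow {n : ℕ} (hn : n ≠ 0) :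
    (n ! : ℝ) ≤ exp 1 * √n * (n / exp 1) ^ n := by
  obtain ⟨k, rfl⟩ := Nat.exists_eq_add_one_of_ne_zero hn
  have h : Stirling.stirlingSeq (k + 1) ≤ Stirling.stirlingSeq 1 :=
    Stirling.stirlingSeq'_antitone (Nat.zero_le k)
  rw [Stirling.stirlingSeq_one, Stirling.stirlingSeq,
    div_le_div_iff₀ (by positivity) (by positivity), sqrt_mul zero_le_two] at h
  refine le_of_mul_le_mul_right (h.trans_eq ?_) (by positivity : (0 : ℝ) < √2)
  ring

lemma mul_log_sub_le_log_add_mul_log_sub {x y : ℝ} (hy : 0 < y) (hx : 1 ≤ x) (hxy : x ≤ y + 1) :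
    x * log x - x ≤ log x + (y * log y - y) := by
  have hlogx : 0 ≤ log x := log_nonneg hx
  have hlog : y - x ≤ y * (log y - log x) := by
    have := one_sub_inv_le_log_of_pos (div_pos hy (by linarith : (0 : ℝ) < x))
    rw [inv_div, log_div hy.ne' (by positivity)] at this
    have := mul_le_mul_of_nonneg_left this hy.le
    rwa [mul_sub, mul_one, mul_div_cancel₀ _ hy.ne'] at this
  nlinarith

lemma rpow_self_mul_exp_neg_le_mul_Gamma_add_one {x : ℝ} (hx : 1 ≤ x) :
    x ^ x * exp (-x) ≤ x * Gamma (x + 1) := by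
  set m := ⌊x⌋₊
  have hm : (1 : ℝ) ≤ m := by exact_mod_cast Nat.le_floor (by exact_mod_cast hx)
  have hmx : (m : ℝ) ≤ x := Nat.floor_le (by linarith)
  have hxm : x ≤ m + 1 := (Nat.lt_floor_add_one x).le
  have hfact : (m : ℝ) ^ m * exp (-m) ≤ m ! := by
    have := pow_div_factorial_le_exp (m : ℝ) (by linarith) m
    rw [div_le_iff₀ (by positivity)] at this
    rw [exp_neg, ← div_eq_mul_inv, div_le_iff₀ (exp_pos _)]
    linarith
  have hGamma : (m ! : ℝ) ≤ Gamma (x + 1) := by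
    rw [← Gamma_nat_eq_factorial]
    exact Gamma_strictMonoOn_Ici.monotoneOn (by simp only [Set.mem_Ici]; linarith)
      (by simp only [Set.mem_Ici]; linarith) (by linarith)
  calc x ^ x * exp (-x) = exp (x * log x - x) := by
        rw [rpow_def_of_pos (by linarith), ← exp_add, mul_comm, sub_eq_add_neg]
    _ ≤ exp (log x + (m * log m - m)) :=
        exp_le_exp.2 (mul_log_sub_le_log_add_mul_log_sub (by linarith) hx hxm)
    _ = x * ((m : ℝ) ^ m * exp (-m)) := by
        rw [exp_add, exp_log (by linarith), sub_eq_add_neg, exp_add, ← Real.log_pow,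
          exp_log (by positivity)]
    _ ≤ x * Gamma (x + 1) := mul_le_mul_of_nonneg_left (hfact.trans hGamma) (by linarith)

lemma one_sub_add_mul_log_pos {α : ℝ} (h0 : 0 < α) (h1 : α ≠ 1) : 0 < 1 - α + α * log α := by
  have h := log_lt_sub_one_of_pos (inv_pos.2 h0) (inv_ne_one.2 h1)
  rw [log_inv] at h
  have := mul_lt_mul_of_pos_left h h0
  rw [mul_sub, mul_inv_cancel₀ h0.ne', mul_one] at this
  linarith

lemma factorial_div_rpow_mul_Gamma_le {α : ℝ} (hα : 0 < α) (j : ℕ) {ℓ : ℕ} (hℓ : 1 ≤ α * ℓ) :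
    (ℓ ! : ℝ) / ((ℓ : ℝ) ^ ((1 - α) * ℓ) * Gamma (α * ℓ + j + 1)) ≤
      exp 1 * α * ((ℓ : ℝ) ^ (3 / 2 : ℝ) * exp (-(1 - α + α * log α) * ℓ)) := by
  have hℓ0 : ℓ ≠ 0 := by rintro rfl; norm_num at hℓ
  have hL : 0 < (ℓ : ℝ) := by positivity
  have hGamma : (α * ℓ) ^ (α * ℓ) * exp (-(α * ℓ)) / (α * ℓ) ≤ Gamma (α * ℓ + j + 1) := by
    have hj : (0 : ℝ) ≤ j := j.cast_nonneg
    rw [div_le_iff₀ (by positivity), mul_comm _ (α * ℓ)]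
    refine (rpow_self_mul_exp_neg_le_mul_Gamma_add_one hℓ).trans ?_
    refine mul_le_mul_of_nonneg_left (Gamma_strictMonoOn_Ici.monotoneOn ?_ ?_ ?_) (by positivity)
    · simp only [Set.mem_Ici]; linarith
    · simp only [Set.mem_Ici]; linarith
    · linarith
  calc (ℓ ! : ℝ) / ((ℓ : ℝ) ^ ((1 - α) * ℓ) * Gamma (α * ℓ + j + 1))
      ≤ exp 1 * √ℓ * (ℓ / exp 1) ^ ℓ /
          ((ℓ : ℝ) ^ ((1 - α) * ℓ) * ((α * ℓ) ^ (α * ℓ) * exp (-(α * ℓ)) / (α * ℓ))) :=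
        div_le_div₀ (by positivity) (factorial_le_exp_one_mul_sqrt_mul_div_exp_one_pow hℓ0)
          (by positivity) (mul_le_mul_of_nonneg_left hGamma (by positivity))
    _ = exp 1 * α * ((ℓ : ℝ) ^ (3 / 2 : ℝ) * exp (-(1 - α + α * log α) * ℓ)) := by
        have hpow : ((ℓ : ℝ) / exp 1) ^ ℓ =
            (ℓ : ℝ) ^ ((1 - α) * ℓ) * (ℓ : ℝ) ^ (α * ℓ) / exp ℓ := by
          rw [div_pow, exp_one_pow, ← rpow_natCast, ← rpow_add hL]
          ring_nf
        have h32 : (ℓ : ℝ) ^ (3 / 2 : ℝ) = ℓ * √ℓ := by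
          rw [sqrt_eq_rpow, ← rpow_one_add' hL.le (by norm_num)]
          norm_num
        have hexp : exp (-(1 - α + α * log α) * ℓ) = exp (α * ℓ) / (exp ℓ * α ^ (α * ℓ)) := by
          rw [rpow_def_of_pos hα, ← exp_add, ← exp_sub]
          ring_nf
        rw [hpow, h32, hexp, mul_rpow hα.le hL.le, exp_neg]
        field_simp

/-- Limit claim (2.15) in the proof of Lemma 2.2(i): for `0 < α < 1` and any `j : ℕ`,
`ℓ! / (ℓ^{(1−α)ℓ} Γ(αℓ + j + 1)) → 0` as `ℓ → ∞`. -/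
theorem factorial_div_rpow_gamma_tendsto_zero (α : ℝ) (hα0 : 0 < α) (hα1 : α < 1) (j : ℕ) :
    Filter.Tendsto
      (fun ℓ : ℕ =>
        (Nat.factorial ℓ : ℝ) /
          ((ℓ : ℝ) ^ ((1 - α) * ℓ) * Real.Gamma (α * ℓ + j + 1)))
      Filter.atTop (nhds 0) := by
  have hc : 0 < 1 - α + α * log α := one_sub_add_mul_log_pos hα0 hα1.ne
  have hbound : Tendsto (fun ℓ : ℕ =>
      exp 1 * α * ((ℓ : ℝ) ^ (3 / 2 : ℝ) * exp (-(1 - α + α * log α) * ℓ))) atTop (𝓝 0) := by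
    simpa using ((tendsto_rpow_mul_exp_neg_mul_atTop_nhds_zero _ _ hc).comp
      tendsto_natCast_atTop_atTop).const_mul (exp 1 * α)
  refine squeeze_zero' (.of_forall fun ℓ ↦ div_nonneg (by positivity)
    (mul_nonneg (by positivity) (Gamma_nonneg_of_nonneg (by positivity)))) ?_ hbound
  filter_upwards [(tendsto_natCast_atTop_atTop.const_mul_atTop hα0).eventually_ge_atTop 1]
    with ℓ hℓ using factorial_div_rpow_mul_Gamma_le hα0 j hℓ
end

section
/- Let f : ℝ → ℝ be continuous, nonnegative and bounded above on [0, ∞), let h : ℝ → ℝ be nonnegative with h(u) → 0 as u → ∞, and let 0 ≤ b < 1. Suppose that for all real numbers s, t with 0 ≤ s ≤ t, f(t) ≤ h(t−s)·sup_{τ ∈ [0,s]} f(τ) + b·sup_{τ ∈ [s,t]} f(τ). Then f(t) → 0 as t → ∞. -/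
/-!
Let `g s = sup_{τ ≥ s} f τ`. Once `h ≤ ε` beyond `S`, the split bound with the split point `s`
gives `g (s + S) ≤ ε · g 0 + b · g s`. Passing to the infimum `L` of `g` yields
`L ≤ ε · g 0 + b · L` for every `ε > 0`, hence `(1 - b) L ≤ 0`, so `L = 0`; and `0 ≤ f t ≤ g s`
for `t ≥ s` squeezes `f` to `0`.
-/

open Set Filter

/-- `sup_{τ ≥ s} f τ`; the junk value `0` if `f` is unbounded above on `[s, ∞)`. -/
noncomputable def tailSup (f : ℝ → ℝ) (s : ℝ) : ℝ := sSup (f '' Ici s)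

section TailSup

variable {f : ℝ → ℝ} {s t : ℝ}

lemma bddAbove_image_Ici (hfb : BddAbove (f '' Ici 0)) (hs : 0 ≤ s) : BddAbove (f '' Ici s) :=
  hfb.mono (image_mono (Ici_subset_Ici.2 hs))

lemma le_tailSup (hfb : BddAbove (f '' Ici 0)) (hs : 0 ≤ s) (hst : s ≤ t) : f t ≤ tailSup f s :=
  le_csSup (bddAbove_image_Ici hfb hs) ⟨t, hst, rfl⟩

lemma tailSup_nonneg (hf0 : ∀ t, 0 ≤ f t) (hfb : BddAbove (f '' Ici 0)) (hs : 0 ≤ s) :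
    0 ≤ tailSup f s :=
  (hf0 s).trans (le_tailSup hfb hs le_rfl)

lemma sSup_image_Icc_le_tailSup (hfb : BddAbove (f '' Ici 0)) (hs : 0 ≤ s) (hst : s ≤ t) :
    sSup (f '' Icc s t) ≤ tailSup f s :=
  csSup_le_csSup (bddAbove_image_Ici hfb hs) ((nonempty_Icc.2 hst).image f)
    (image_mono Icc_subset_Ici_self)

lemma tailSup_add_le {h : ℝ → ℝ} {b ε S : ℝ} (hf0 : ∀ t, 0 ≤ f t)
    (hfb : BddAbove (f '' Ici 0)) (hb0 : 0 ≤ b) (hε : 0 ≤ ε) (hS : 0 ≤ S)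
    (hhS : ∀ u, S ≤ u → h u ≤ ε) (hs : 0 ≤ s)
    (hbound : ∀ t, s ≤ t →
      f t ≤ h (t - s) * sSup (f '' Icc 0 s) + b * sSup (f '' Icc s t)) :
    tailSup f (s + S) ≤ ε * tailSup f 0 + b * tailSup f s := by
  refine csSup_le ((nonempty_Ici).image f) ?_
  rintro _ ⟨t, ht, rfl⟩
  have hst : s ≤ t := by linarith [mem_Ici.1 ht]
  have hhead_nonneg : 0 ≤ sSup (f '' Icc 0 s) :=
    (hf0 0).trans (le_csSup (hfb.mono (image_mono Icc_subset_Ici_self)) ⟨0, ⟨le_rfl, hs⟩, rfl⟩)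
  have hhead : h (t - s) * sSup (f '' Icc 0 s) ≤ ε * tailSup f 0 :=
    calc h (t - s) * sSup (f '' Icc 0 s) ≤ ε * sSup (f '' Icc 0 s) :=
          mul_le_mul_of_nonneg_right (hhS _ (by linarith [mem_Ici.1 ht])) hhead_nonneg
      _ ≤ ε * tailSup f 0 :=
          mul_le_mul_of_nonneg_left (sSup_image_Icc_le_tailSup hfb le_rfl hs) hε
  have htail : b * sSup (f '' Icc s t) ≤ b * tailSup f s :=
    mul_le_mul_of_nonneg_left (sSup_image_Icc_le_tailSup hfb hs hst) hb0
  linarith [hbound t hst]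

end TailSup

lemma exists_lt_of_le_add_mul_shift {g : ℝ → ℝ} {b δ : ℝ} (hg0 : ∀ s, 0 ≤ s → 0 ≤ g s)
    (hb0 : 0 ≤ b) (hb1 : b < 1)
    (hshift : ∀ c, 0 < c → ∃ S, 0 ≤ S ∧ ∀ s, 0 ≤ s → g (s + S) ≤ c + b * g s) (hδ : 0 < δ) :
    ∃ s, 0 ≤ s ∧ g s < δ := by
  set L := ⨅ s : Ici (0 : ℝ), g s
  have hbdd : BddBelow (range fun s : Ici (0 : ℝ) => g s) :=
    ⟨0, by rintro _ ⟨s, rfl⟩; exact hg0 s s.2⟩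
  have hfix : ∀ c, 0 < c → L ≤ c + b * L := by
    intro c hc
    obtain ⟨S, hS, hgS⟩ := hshift c hc
    have : L - c ≤ b * L := by
      rw [Real.mul_iInf_of_nonneg hb0]
      refine le_ciInf fun s => ?_
      have hLS : L ≤ g (s + S) := ciInf_le hbdd ⟨s + S, add_nonneg s.2 hS⟩
      linarith [hgS s s.2]
    linarith
  have hL : L ≤ 0 := by
    by_contra! hL
    nlinarith [hfix (L * (1 - b) / 2) (by nlinarith)]
  obtain ⟨s, hs⟩ := exists_lt_of_ciInf_lt (hL.trans_lt hδ)
  exact ⟨s, s.2, hs⟩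

theorem tendsto_zero_of_split_sup_bound_general (f : ℝ → ℝ)
    (hf0 : ∀ t : ℝ, 0 ≤ f t) (hfb : BddAbove (f '' Set.Ici 0))
    (h : ℝ → ℝ) (hh : Filter.Tendsto h Filter.atTop (nhds 0))
    (b : ℝ) (hb0 : 0 ≤ b) (hb1 : b < 1)
    (hbound : ∀ s t : ℝ, 0 ≤ s → s ≤ t →
      f t ≤ h (t - s) * sSup (f '' Set.Icc 0 s) + b * sSup (f '' Set.Icc s t)) :
    Filter.Tendsto f Filter.atTop (nhds 0) := by
  set M := tailSup f 0
  have hM : 0 ≤ M := tailSup_nonneg hf0 hfb le_rfl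
  have hshift : ∀ c, 0 < c → ∃ S, 0 ≤ S ∧ ∀ s, 0 ≤ s →
      tailSup f (s + S) ≤ c + b * tailSup f s := by
    intro c hc
    have hε : 0 < c / (M + 1) := by positivity
    obtain ⟨S, hS⟩ := eventually_atTop.1 (hh.eventually (ge_mem_nhds hε))
    refine ⟨max S 0, le_max_right _ _, fun s hs => ?_⟩
    have hεM : c / (M + 1) * M ≤ c := by
      rw [div_mul_eq_mul_div, div_le_iff₀ (by positivity)]
      nlinarith
    have := tailSup_add_le hf0 hfb hb0 hε.le (le_max_right _ _)
      (fun u hu => hS u ((le_max_left _ _).trans hu)) hs (hbound s · hs)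
    linarith
  refine tendsto_order.2 ⟨fun a ha => Eventually.of_forall fun t => ha.trans_le (hf0 t),
    fun a ha => ?_⟩
  obtain ⟨s, hs, hsa⟩ := exists_lt_of_le_add_mul_shift (fun _ => tailSup_nonneg hf0 hfb) hb0 hb1 hshift ha
  exact eventually_atTop.2 ⟨s, fun t hst => (le_tailSup hfb hs hst).trans_lt hsa⟩

/-- Mechanism of the asymptotic part of Theorem 3.3(i) (Eqs. (3.19)–(3.23)): if `f` is
continuous, nonnegative and bounded above on `[0,∞)`, `h ≥ 0` with `h(u) → 0` as
`u → ∞`, `0 ≤ b < 1`, and `f(t) ≤ h(t−s)·sup_{[0,s]} f + b·sup_{[s,t]} f` whenever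
`0 ≤ s ≤ t`, then `f(t) → 0` as `t → ∞`. -/
theorem tendsto_zero_of_split_sup_bound (f : ℝ → ℝ) (hf : Continuous f)
    (hf0 : ∀ t : ℝ, 0 ≤ f t) (hfb : BddAbove (f '' Set.Ici 0))
    (h : ℝ → ℝ) (hh0 : ∀ u : ℝ, 0 ≤ h u) (hh : Filter.Tendsto h Filter.atTop (nhds 0))
    (b : ℝ) (hb0 : 0 ≤ b) (hb1 : b < 1)
    (hbound : ∀ s t : ℝ, 0 ≤ s → s ≤ t →
      f t ≤ h (t - s) * sSup (f '' Set.Icc 0 s) + b * sSup (f '' Set.Icc s t)) :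
    Filter.Tendsto f Filter.atTop (nhds 0) :=
  tendsto_zero_of_split_sup_bound_general f hf0 hfb h hh b hb0 hb1 hbound
end

section
/- Let k ≥ 3 be an integer, let α be a real number with k−1 ≤ α < k, let a ≥ 0 and t ≥ 0 be real numbers. Then Σ_{ℓ=0}^∞ aˡ t^{(ℓ+1)α−1}/Γ((ℓ+1)α) ≤ t^{α+1−k} · Σ_{ℓ=0}^∞ aˡ t^{αℓ+k−2}/Γ(αℓ + k − 1). -/
lemma gamma_ge_factorial (n : ℕ) (x : ℝ) (h : 2 * n + 2 ≤ x) :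
    (n.factorial : ℝ) ≤ Real.Gamma x := by
  have h2 : (2 : ℝ) ≤ 2 * n + 2 := by have := Nat.cast_nonneg (α := ℝ) n; linarith
  have hmem : (2 * (n:ℝ) + 2 : ℝ) ∈ Set.Ici (2:ℝ) := h2
  have hmem' : x ∈ Set.Ici (2:ℝ) := le_trans h2 h
  have hmono := Real.Gamma_strictMonoOn_Ici.monotoneOn hmem hmem' h
  have heq : Real.Gamma (2 * (n:ℝ) + 2) = ((2 * n + 1).factorial : ℝ) := by
    have h3 : ((2 * n + 1 : ℕ) : ℝ) + 1 = 2 * (n:ℝ) + 2 := by push_cast; ring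
    rw [← h3, Real.Gamma_nat_eq_factorial]
  have hfac : (n.factorial : ℝ) ≤ ((2 * n + 1).factorial : ℝ) := by
    exact_mod_cast Nat.factorial_le (by omega)
  calc (n.factorial : ℝ) ≤ ((2 * n + 1).factorial : ℝ) := hfac
    _ = Real.Gamma (2 * (n:ℝ) + 2) := heq.symm
    _ ≤ Real.Gamma x := hmono

lemma gamma_pos_of (x : ℝ) (n : ℕ) (h : 2 * n + 2 ≤ x) : 0 < Real.Gamma x :=
  Real.Gamma_pos_of_pos (lt_of_lt_of_le (by positivity) h)

/-- Scalar form of the second inequality of Lemma 2.2(iii): for `k ≥ 3`,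
`k−1 ≤ α < k`, `a ≥ 0` and `t ≥ 0`,
`Σ_ℓ aˡ t^{(ℓ+1)α−1}/Γ((ℓ+1)α) ≤ t^{α+1−k} Σ_ℓ aˡ t^{αℓ+k−2}/Γ(αℓ+k−1)`. -/
theorem phi_alpha_le_phi_alpha_km2 (k : ℕ) (hk : 3 ≤ k) (α : ℝ)
    (hα1 : (k : ℝ) - 1 ≤ α) (hα2 : α < (k : ℝ)) (a t : ℝ) (ha : 0 ≤ a) (ht : 0 ≤ t) :
    (∑' ℓ : ℕ, a ^ ℓ * t ^ ((ℓ + 1) * α - 1) / Real.Gamma ((ℓ + 1) * α)) ≤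
      t ^ (α + 1 - k) *
        ∑' ℓ : ℕ, a ^ ℓ * t ^ (α * ℓ + k - 2) / Real.Gamma (α * ℓ + k - 1) := by
  have hk3 : (3:ℝ) ≤ (k:ℝ) := by exact_mod_cast hk
  have hα : (2:ℝ) ≤ α := by linarith
  -- arguments of Gamma are large
  have harg1 : ∀ ℓ : ℕ, 2 * (ℓ:ℝ) + 2 ≤ ((ℓ:ℝ) + 1) * α := by
    intro ℓ
    have hℓ : (0:ℝ) ≤ (ℓ:ℝ) := Nat.cast_nonneg ℓ
    nlinarith
  have harg2 : ∀ ℓ : ℕ, 2 * (ℓ:ℝ) + 2 ≤ α * ℓ + (k:ℝ) - 1 := by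
    intro ℓ
    have hℓ : (0:ℝ) ≤ (ℓ:ℝ) := Nat.cast_nonneg ℓ
    nlinarith
  have hΓ1pos : ∀ ℓ : ℕ, 0 < Real.Gamma (((ℓ:ℝ) + 1) * α) := fun ℓ => gamma_pos_of _ ℓ (harg1 ℓ)
  have hΓ2pos : ∀ ℓ : ℕ, 0 < Real.Gamma (α * ℓ + (k:ℝ) - 1) := fun ℓ => gamma_pos_of _ ℓ (harg2 ℓ)
  have hg_nonneg : ∀ ℓ : ℕ, 0 ≤ a ^ ℓ * t ^ (α * ℓ + (k:ℝ) - 2) / Real.Gamma (α * ℓ + (k:ℝ) - 1) :=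
    fun ℓ => div_nonneg (mul_nonneg (pow_nonneg ha ℓ) (Real.rpow_nonneg ht _)) (hΓ2pos ℓ).le
  rcases eq_or_lt_of_le ht with h0 | htpos
  · -- t = 0
    have hz : ∀ ℓ : ℕ, a ^ ℓ * t ^ (((ℓ:ℝ) + 1) * α - 1) / Real.Gamma (((ℓ:ℝ) + 1) * α) = 0 := by
      intro ℓ
      have hℓ : (0:ℝ) ≤ (ℓ:ℝ) := Nat.cast_nonneg ℓ
      have hexp : ((ℓ:ℝ) + 1) * α - 1 ≠ 0 := by nlinarith
      rw [← h0, Real.zero_rpow hexp]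
      ring
    calc (∑' ℓ : ℕ, a ^ ℓ * t ^ (((ℓ:ℝ) + 1) * α - 1) / Real.Gamma (((ℓ:ℝ) + 1) * α))
        = ∑' _ : ℕ, (0:ℝ) := by exact tsum_congr hz
      _ = 0 := tsum_zero
      _ ≤ _ := mul_nonneg (Real.rpow_nonneg ht _) (tsum_nonneg hg_nonneg)
  · -- t > 0
    -- summability
    have hbase : Summable (fun ℓ : ℕ => (a * t ^ α) ^ ℓ / (ℓ.factorial : ℝ)) :=
      Real.summable_pow_div_factorial _
    have hf_sum : Summable (fun ℓ : ℕ =>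
        a ^ ℓ * t ^ (((ℓ:ℝ) + 1) * α - 1) / Real.Gamma (((ℓ:ℝ) + 1) * α)) := by
      apply Summable.of_nonneg_of_le
        (fun ℓ => div_nonneg (mul_nonneg (pow_nonneg ha ℓ) (Real.rpow_nonneg ht _)) (hΓ1pos ℓ).le)
        (fun ℓ => ?_) (hbase.mul_left (t ^ (α - 1)))
      have hΓ : (ℓ.factorial : ℝ) ≤ Real.Gamma (((ℓ:ℝ) + 1) * α) := gamma_ge_factorial ℓ _ (harg1 ℓ)
      have hfacpos : (0:ℝ) < (ℓ.factorial : ℝ) := by exact_mod_cast ℓ.factorial_pos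
      have ht1 : t ^ (((ℓ:ℝ) + 1) * α - 1) = t ^ (α - 1) * (t ^ α) ^ ℓ := by
        rw [show ((ℓ:ℝ) + 1) * α - 1 = (α - 1) + α * (ℓ:ℝ) by ring, Real.rpow_add htpos,
          ← Real.rpow_natCast (t ^ α) ℓ, ← Real.rpow_mul ht]
      rw [ht1]
      calc a ^ ℓ * (t ^ (α - 1) * (t ^ α) ^ ℓ) / Real.Gamma (((ℓ:ℝ) + 1) * α)
          ≤ a ^ ℓ * (t ^ (α - 1) * (t ^ α) ^ ℓ) / (ℓ.factorial : ℝ) := by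
            gcongr
        _ = t ^ (α - 1) * ((a * t ^ α) ^ ℓ / (ℓ.factorial : ℝ)) := by rw [mul_pow]; ring
    have hg_sum : Summable (fun ℓ : ℕ =>
        a ^ ℓ * t ^ (α * ℓ + (k:ℝ) - 2) / Real.Gamma (α * ℓ + (k:ℝ) - 1)) := by
      apply Summable.of_nonneg_of_le hg_nonneg (fun ℓ => ?_) (hbase.mul_left (t ^ ((k:ℝ) - 2)))
      have hΓ : (ℓ.factorial : ℝ) ≤ Real.Gamma (α * ℓ + (k:ℝ) - 1) := gamma_ge_factorial ℓ _ (harg2 ℓ)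
      have hfacpos : (0:ℝ) < (ℓ.factorial : ℝ) := by exact_mod_cast ℓ.factorial_pos
      have ht1 : t ^ (α * (ℓ:ℝ) + (k:ℝ) - 2) = t ^ ((k:ℝ) - 2) * (t ^ α) ^ ℓ := by
        rw [show α * (ℓ:ℝ) + (k:ℝ) - 2 = ((k:ℝ) - 2) + α * (ℓ:ℝ) by ring, Real.rpow_add htpos,
          ← Real.rpow_natCast (t ^ α) ℓ, ← Real.rpow_mul ht]
      rw [ht1]
      calc a ^ ℓ * (t ^ ((k:ℝ) - 2) * (t ^ α) ^ ℓ) / Real.Gamma (α * ℓ + (k:ℝ) - 1)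
          ≤ a ^ ℓ * (t ^ ((k:ℝ) - 2) * (t ^ α) ^ ℓ) / (ℓ.factorial : ℝ) := by
            gcongr
        _ = t ^ ((k:ℝ) - 2) * ((a * t ^ α) ^ ℓ / (ℓ.factorial : ℝ)) := by rw [mul_pow]; ring
    -- termwise comparison
    have hterm : ∀ ℓ : ℕ,
        a ^ ℓ * t ^ (((ℓ:ℝ) + 1) * α - 1) / Real.Gamma (((ℓ:ℝ) + 1) * α) ≤
        t ^ (α + 1 - (k:ℝ)) *
          (a ^ ℓ * t ^ (α * ℓ + (k:ℝ) - 2) / Real.Gamma (α * ℓ + (k:ℝ) - 1)) := by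
      intro ℓ
      have hℓ : (0:ℝ) ≤ (ℓ:ℝ) := Nat.cast_nonneg ℓ
      have hΓle : Real.Gamma (α * ℓ + (k:ℝ) - 1) ≤ Real.Gamma (((ℓ:ℝ) + 1) * α) := by
        have h2a : (2:ℝ) ≤ α * ℓ + (k:ℝ) - 1 := le_trans (by linarith) (harg2 ℓ)
        have h2b : (2:ℝ) ≤ ((ℓ:ℝ) + 1) * α := le_trans (by linarith) (harg1 ℓ)
        exact Real.Gamma_strictMonoOn_Ici.monotoneOn h2a h2b (by nlinarith)
      have ht1 : t ^ (((ℓ:ℝ) + 1) * α - 1) = t ^ (α + 1 - (k:ℝ)) * t ^ (α * (ℓ:ℝ) + (k:ℝ) - 2) := by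
        rw [show ((ℓ:ℝ) + 1) * α - 1 = (α + 1 - (k:ℝ)) + (α * (ℓ:ℝ) + (k:ℝ) - 2) by ring,
          Real.rpow_add htpos]
      rw [ht1]
      calc a ^ ℓ * (t ^ (α + 1 - (k:ℝ)) * t ^ (α * (ℓ:ℝ) + (k:ℝ) - 2)) /
            Real.Gamma (((ℓ:ℝ) + 1) * α)
          ≤ a ^ ℓ * (t ^ (α + 1 - (k:ℝ)) * t ^ (α * (ℓ:ℝ) + (k:ℝ) - 2)) /
            Real.Gamma (α * ℓ + (k:ℝ) - 1) := by
            gcongr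
            exact hΓ2pos ℓ
        _ = t ^ (α + 1 - (k:ℝ)) *
            (a ^ ℓ * t ^ (α * (ℓ:ℝ) + (k:ℝ) - 2) / Real.Gamma (α * ℓ + (k:ℝ) - 1)) := by ring
    calc (∑' ℓ : ℕ, a ^ ℓ * t ^ (((ℓ:ℝ) + 1) * α - 1) / Real.Gamma (((ℓ:ℝ) + 1) * α))
        ≤ ∑' ℓ : ℕ, t ^ (α + 1 - (k:ℝ)) *
            (a ^ ℓ * t ^ (α * ℓ + (k:ℝ) - 2) / Real.Gamma (α * ℓ + (k:ℝ) - 1)) :=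
          Summable.tsum_le_tsum hterm hf_sum (hg_sum.mul_left _)
      _ = t ^ (α + 1 - (k:ℝ)) *
            ∑' ℓ : ℕ, a ^ ℓ * t ^ (α * ℓ + (k:ℝ) - 2) / Real.Gamma (α * ℓ + (k:ℝ) - 1) :=
          tsum_mul_left
end
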